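/- For every weighted tree grammar with constraints (WTGc) over a commutative semiring S there exists an equivalent weighted tree automaton with constraints (WTAc) over S, i.e. a WTGc in which every production is normalized; moreover, if the given WTGc is positive, then the equivalent WTAc can be chosen positive. -/

import Mathlib

/-! Common framework: ranked trees, weighted tree grammars with constraints (WTGc). -/

/-- Unranked trees over a symbol type `α`; wellformedness w.r.t. an arity map
is imposed separately. -/
inductive RTree (α : Type) : Type
  | node : α → List (RTree α) → RTree α

namespace RTree

variable {α β : Type}

/-- The subtree of `t` at position `w` (positions are lists of child indices). -/
def subtreeAt : RTree α → List ℕ → Option (RTree α)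
  | t, [] => some t
  | node _ ts, i :: w => (ts[i]?).bind fun c => subtreeAt c w
termination_by t w => w.length

/-- Replace the subtree at position `w` by `s`. -/
def replaceAt : RTree α → List ℕ → RTree α → RTree α
  | _, [], s => s
  | node a ts, i :: w, s =>
      node a (ts.mapIdx fun j c => if j = i then replaceAt c w s else c)
termination_by t w s => w.length

/-- Relabeling of trees. -/
def map (f : α → β) : RTree α → RTree β
  | node a ts => node (f a) (ts.attach.map fun c => map f c.1)
termination_by t => sizeOf t
decreasing_by
  simp_wf
  have := List.sizeOf_lt_of_mem c.2
  omega

/-- The size of a tree: its number of positions. -/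
def size : RTree α → ℕ
  | node _ ts => 1 + (ts.attach.map fun c => size c.1).sum
termination_by t => sizeOf t
decreasing_by
  simp_wf
  have := List.sizeOf_lt_of_mem c.2
  omega

/-- The height of a tree: the maximal length of one of its positions. -/
def height : RTree α → ℕ
  | node _ ts => (ts.attach.map fun c => height c.1 + 1).foldr max 0
termination_by t => sizeOf t
decreasing_by
  simp_wf
  have := List.sizeOf_lt_of_mem c.2
  omega

/-- Wellformedness of a tree w.r.t. a ranked alphabet: the number of children of
every node equals the rank of its label. -/
inductive WF (ar : α → ℕ) : RTree α → Prop
  | node {a : α} {ts : List (RTree α)} :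
      ts.length = ar a → (∀ t ∈ ts, WF ar t) → WF ar (node a ts)

/-- Substitution of trees for the nonterminal-labelled (i.e. `Sum.inr`-labelled)
leaves: the leaf at absolute position `w` is replaced by `θ w`.  The second
argument is the position of the current subtree. -/
def substNT {Q : Type} (θ : List ℕ → RTree α) : RTree (α ⊕ Q) → List ℕ → RTree α
  | node (Sum.inr _) _, w => θ w
  | node (Sum.inl a) ts, w =>
      node a (ts.attach.mapIdx fun i c => substNT θ c.1 (w ++ [i]))
termination_by t _ => sizeOf t
decreasing_by
  simp_wf
  have := List.sizeOf_lt_of_mem c.2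
  omega

/-- The list of pairs (position, nonterminal) of the nonterminal-labelled
positions of a tree in `T_Σ(Q)`, in left-to-right order. -/
def ntPos {Q : Type} : RTree (α ⊕ Q) → List (List ℕ × Q)
  | node (Sum.inr q) _ => [([], q)]
  | node (Sum.inl _) ts =>
      (ts.attach.mapIdx fun i c => (ntPos c.1).map fun x => (i :: x.1, x.2)).flatten
termination_by t => sizeOf t
decreasing_by
  simp_wf
  have := List.sizeOf_lt_of_mem c.2
  omega

/-- Substitute the trees of the list `us` for the variables (`Sum.inr i` stands
for the variable `x_{i+1}`); variables without a corresponding list entry stay. -/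
def substVL (us : List (RTree (β ⊕ ℕ))) : RTree (β ⊕ ℕ) → RTree (β ⊕ ℕ)
  | node (Sum.inr i) ts => (us[i]?).getD (node (Sum.inr i) ts)
  | node (Sum.inl b) ts => node (Sum.inl b) (ts.attach.map fun c => substVL us c.1)
termination_by t => sizeOf t
decreasing_by
  simp_wf
  have := List.sizeOf_lt_of_mem c.2
  omega

/-- Application of the tree homomorphism induced by `h : α → T_β(X)`. -/
def applyHom (h : α → RTree (β ⊕ ℕ)) : RTree α → RTree (β ⊕ ℕ)
  | node a ts => substVL (ts.attach.map fun c => applyHom h c.1) (h a)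
termination_by t => sizeOf t
decreasing_by
  simp_wf
  have := List.sizeOf_lt_of_mem c.2
  omega

/-- A tree `t` satisfies the constraint `(v, v')` if both positions exist in `t`
and the corresponding subtrees are equal. -/
def satC (t : RTree α) (c : List ℕ × List ℕ) : Prop :=
  ∃ s, t.subtreeAt c.1 = some s ∧ t.subtreeAt c.2 = some s

end RTree

/-- The strict lexicographic order on positions in which proper prefixes are
*larger* than their extensions (and `ε` is the largest element). -/
inductive PosLt : List ℕ → List ℕ → Prop
  | ne_nil (i : ℕ) (w : List ℕ) : PosLt (i :: w) []
  | head {i j : ℕ} (v w : List ℕ) : i < j → PosLt (i :: v) (j :: w)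
  | tail {i : ℕ} {v w : List ℕ} : PosLt v w → PosLt (i :: v) (i :: w)

/-- A derivation (a list of production/position pairs) is left-most if its
positions are strictly increasing w.r.t. `PosLt`. -/
def Leftmost {P : Type} (d : List (P × List ℕ)) : Prop :=
  List.Chain' PosLt (d.map Prod.snd)

/-- The two-element Boolean semiring. -/
inductive B2 : Type
  | zero
  | one
  deriving DecidableEq

namespace B2

def add : B2 → B2 → B2
  | zero, x => x
  | one, _ => one

def mul : B2 → B2 → B2
  | zero, _ => zero
  | one, x => x

instance : Zero B2 := ⟨zero⟩
instance : One B2 := ⟨one⟩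
instance : Add B2 := ⟨add⟩
instance : Mul B2 := ⟨mul⟩

instance : CommSemiring B2 where
  add_assoc := fun a b c => by cases a <;> cases b <;> cases c <;> rfl
  zero_add := fun a => by cases a <;> rfl
  add_zero := fun a => by cases a <;> rfl
  add_comm := fun a b => by cases a <;> cases b <;> rfl
  mul_assoc := fun a b c => by cases a <;> cases b <;> cases c <;> rfl
  one_mul := fun a => by cases a <;> rfl
  mul_one := fun a => by cases a <;> rfl
  zero_mul := fun a => by cases a <;> rfl
  mul_zero := fun a => by cases a <;> rfl
  left_distrib := fun a b c => by cases a <;> cases b <;> cases c <;> rfl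
  right_distrib := fun a b c => by cases a <;> cases b <;> cases c <;> rfl
  mul_comm := fun a b => by cases a <;> cases b <;> rfl
  nsmul := nsmulRec
  npow := npowRec
  nsmul_zero := fun a => rfl
  nsmul_succ := fun n a => rfl
  npow_zero := fun a => rfl
  npow_succ := fun n a => rfl

end B2

/-- A weighted tree grammar with constraints (WTGc) over the commutative
semiring `S` and the ranked alphabet `(Γ, ar)`: finitely many nonterminals `Q`
with final weights, and finitely many productions `(lhs p, tgt p, eqc p, nec p)`
with weights, where the left-hand side is a wellformed tree over `Γ` and the
nonterminals that is not itself a nonterminal. -/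
structure WTGc (S : Type) [CommSemiring S] (Γ : Type) (ar : Γ → ℕ) where
  Q : Type
  P : Type
  finQ : Finite Q
  finP : Finite P
  final : Q → S
  lhs : P → RTree (Γ ⊕ Q)
  tgt : P → Q
  eqc : P → Finset (List ℕ × List ℕ)
  nec : P → Finset (List ℕ × List ℕ)
  wt : P → S
  lhs_wf : ∀ p, (lhs p).WF (Sum.elim ar fun _ => 0)
  lhs_ne : ∀ (p : P) (q : Q), lhs p ≠ RTree.node (Sum.inr q) []

namespace WTGc

variable {S : Type} [CommSemiring S] {Γ : Type} {ar : Γ → ℕ}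

/-- A single derivation step of `G` on input tree `t`: at position `w` of the
sentential form `ξ` the left-hand side of production `p` is replaced by its
target nonterminal, provided `t|_w` satisfies all equality constraints and
dissatisfies all inequality constraints of `p`. -/
def Step (G : WTGc S Γ ar) (t : RTree Γ) (ξ : RTree (Γ ⊕ G.Q)) (p : G.P)
    (w : List ℕ) (ζ : RTree (Γ ⊕ G.Q)) : Prop :=
  ξ.subtreeAt w = some (G.lhs p) ∧
  ζ = ξ.replaceAt w (RTree.node (Sum.inr (G.tgt p)) []) ∧
  ∃ s, t.subtreeAt w = some s ∧
    (∀ c ∈ G.eqc p, RTree.satC s c) ∧ (∀ c ∈ G.nec p, ¬ RTree.satC s c)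

/-- `Derives G t ξ d ζ`: the sequence `d` of production/position pairs is a
derivation of `G` for the input tree `t` from the sentential form `ξ` to `ζ`. -/
inductive Derives (G : WTGc S Γ ar) (t : RTree Γ) :
    RTree (Γ ⊕ G.Q) → List (G.P × List ℕ) → RTree (Γ ⊕ G.Q) → Prop
  | refl (ξ : RTree (Γ ⊕ G.Q)) : Derives G t ξ [] ξ
  | step {ξ ζ η : RTree (Γ ⊕ G.Q)} {p : G.P} {w : List ℕ} {d : List (G.P × List ℕ)} :
      G.Step t ξ p w ζ → Derives G t ζ d η → Derives G t ξ ((p, w) :: d) η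

/-- `D G q t` : the set of complete left-most derivations of `G` for `t` to `q`. -/
def D (G : WTGc S Γ ar) (q : G.Q) (t : RTree Γ) : Set (List (G.P × List ℕ)) :=
  {d | Derives G t (t.map Sum.inl) d (RTree.node (Sum.inr q) []) ∧ Leftmost d}

/-- The weight of a derivation: the product of the weights of its productions. -/
def wtD (G : WTGc S Γ ar) (d : List (G.P × List ℕ)) : S :=
  (d.map fun x => G.wt x.1).prod

/-- The weight of `t` at nonterminal `q`: the sum of the weights of all
complete left-most derivations of `G` for `t` to `q`. -/
noncomputable def qWeight (G : WTGc S Γ ar) (q : G.Q) (t : RTree Γ) : S :=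
  ∑ᶠ d ∈ G.D q t, G.wtD d

/-- The weighted tree language generated by `G`. -/
noncomputable def weight (G : WTGc S Γ ar) (t : RTree Γ) : S :=
  ∑ᶠ q : G.Q, G.final q * G.qWeight q t

/-- The support of `G`. -/
def supp (G : WTGc S Γ ar) : Set (RTree Γ) := {t | G.weight t ≠ 0}

/-- Two WTGc are equivalent if they generate the same weighted tree language. -/
def Equivalent (G G' : WTGc S Γ ar) : Prop := ∀ t, G.weight t = G'.weight t

/-- A production is normalized if its left-hand side is of the form
`σ(q_1, …, q_k)` with nonterminals `q_i`. -/
def NormalizedProd (G : WTGc S Γ ar) (p : G.P) : Prop :=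
  ∃ (σ : Γ) (qs : List G.Q),
    G.lhs p = RTree.node (Sum.inl σ) (qs.map fun q => RTree.node (Sum.inr q) [])

/-- A WTGc is a WTAc if all its productions are normalized. -/
def IsWTAc (G : WTGc S Γ ar) : Prop := ∀ p, G.NormalizedProd p

/-- A WTGc is positive if no production has inequality constraints. -/
def Positive (G : WTGc S Γ ar) : Prop := ∀ p, G.nec p = ∅

/-- A WTGc is unconstrained (a WTG) if no production has any constraints. -/
def Unconstrained (G : WTGc S Γ ar) : Prop := ∀ p, G.eqc p = ∅ ∧ G.nec p = ∅

/-- A weighted tree automaton: normalized and unconstrained. -/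
def IsWTA (G : WTGc S Γ ar) : Prop := G.IsWTAc ∧ G.Unconstrained

/-- Position `w` of `ℓ` is labelled by the nonterminal `q`. -/
def ntLabelAt {Q : Type} (ℓ : RTree (Γ ⊕ Q)) (w : List ℕ) (q : Q) : Prop :=
  ℓ.subtreeAt w = some (RTree.node (Sum.inr q) [])

/-- Position `w` of `ℓ` is a nonterminal-labelled position. -/
def IsNTpos {Q : Type} (ℓ : RTree (Γ ⊕ Q)) (w : List ℕ) : Prop :=
  ∃ q : Q, ntLabelAt ℓ w q

/-- A WTGc is classic if all constrained positions of all productions are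
nonterminal-labelled positions of the respective left-hand side. -/
def Classic (G : WTGc S Γ ar) : Prop :=
  ∀ p, ∀ c ∈ G.eqc p ∪ G.nec p, IsNTpos (G.lhs p) c.1 ∧ IsNTpos (G.lhs p) c.2

/-- Boolean final weights. -/
def BooleanFinal (G : WTGc S Γ ar) : Prop := ∀ q, G.final q = 0 ∨ G.final q = 1

/-- Unambiguous: every tree has at most one complete left-most derivation to a
nonterminal with non-zero final weight. -/
def Unambiguous (G : WTGc S Γ ar) : Prop :=
  ∀ (t : RTree Γ) (q q' : G.Q) (d d' : List (G.P × List ℕ)),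
    G.final q ≠ 0 → G.final q' ≠ 0 → d ∈ G.D q t → d' ∈ G.D q' t → q = q' ∧ d = d'

/-- Constraint-determined: two productions never differ only in their
constraint sets. -/
def ConstraintDetermined (G : WTGc S Γ ar) : Prop :=
  ∀ p p' : G.P, G.lhs p = G.lhs p' → G.tgt p = G.tgt p' →
    G.eqc p = G.eqc p' ∧ G.nec p = G.nec p'

/-- `bot` is a sink nonterminal of `G`. -/
def SinkNT (G : WTGc S Γ ar) (bot : G.Q) : Prop :=
  G.final bot = 0 ∧
  (∀ p, G.tgt p = bot →
    G.wt p = 1 ∧ G.eqc p = ∅ ∧ G.nec p = ∅ ∧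
    ∃ σ : Γ, G.lhs p =
      RTree.node (Sum.inl σ) (List.replicate (ar σ) (RTree.node (Sum.inr bot) []))) ∧
  (∀ σ : Γ, ∃ p, G.tgt p = bot ∧ G.lhs p =
      RTree.node (Sum.inl σ) (List.replicate (ar σ) (RTree.node (Sum.inr bot) [])))

/-- The equivalence on positions generated by a set of equality constraints. -/
inductive CEqv (E : Finset (List ℕ × List ℕ)) : List ℕ → List ℕ → Prop
  | base {v v' : List ℕ} : (v, v') ∈ E → CEqv E v v'
  | refl (v : List ℕ) : CEqv E v v
  | symm {v v' : List ℕ} : CEqv E v v' → CEqv E v' v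
  | trans {u v w : List ℕ} : CEqv E u v → CEqv E v w → CEqv E u w

/-- Eq-restricted (Definition 3.2): a positive classic WTGc with a sink
nonterminal `bot` such that within every equivalence class of constrained
nonterminal positions of a left-hand side all nonterminals are `bot` except
for exactly one governing position. -/
def EqRestricted (G : WTGc S Γ ar) (bot : G.Q) : Prop :=
  G.SinkNT bot ∧ G.Classic ∧ G.Positive ∧
  ∀ (p : G.P) (w : List ℕ) (q : G.Q), ntLabelAt (G.lhs p) w q →
    ∃ q' : G.Q,
      (∀ (w' : List ℕ) (q'' : G.Q), CEqv (G.eqc p) w w' →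
          ntLabelAt (G.lhs p) w' q'' → q'' = q' ∨ q'' = bot) ∧
      (∃! w' : List ℕ, CEqv (G.eqc p) w w' ∧ ntLabelAt (G.lhs p) w' q')

end WTGc

/-- A tree homomorphism from `(Γ, arΓ)` to `(Δ, arΔ)`, given by its defining
map: `hmap a ∈ T_Δ(X_{arΓ a})`, where `Sum.inr i` represents the variable
`x_{i+1}`. -/
structure TreeHom (Γ : Type) (arΓ : Γ → ℕ) (Δ : Type) (arΔ : Δ → ℕ) where
  hmap : Γ → RTree (Δ ⊕ ℕ)
  hmap_wf : ∀ a, (hmap a).WF (Sum.elim arΔ fun _ => 0)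
  hmap_var : ∀ (a : Γ) (i : ℕ) (w : List ℕ),
    (hmap a).subtreeAt w = some (RTree.node (Sum.inr i) []) → i < arΓ a

namespace TreeHom

variable {Γ Δ : Type} {arΓ : Γ → ℕ} {arΔ : Δ → ℕ}

/-- Nondeleting: every variable occurs in the defining tree. -/
def Nondeleting (h : TreeHom Γ arΓ Δ arΔ) : Prop :=
  ∀ (a : Γ), ∀ i < arΓ a, ∃ w : List ℕ,
    (h.hmap a).subtreeAt w = some (RTree.node (Sum.inr i) [])

/-- Nonerasing: no defining tree is a variable. -/
def Nonerasing (h : TreeHom Γ arΓ Δ arΔ) : Prop :=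
  ∀ a : Γ, ∃ (δ : Δ) (ts : List (RTree (Δ ⊕ ℕ))), h.hmap a = RTree.node (Sum.inl δ) ts

/-- Application of the induced tree homomorphism. -/
def apply (h : TreeHom Γ arΓ Δ arΔ) : RTree Γ → RTree (Δ ⊕ ℕ) :=
  RTree.applyHom h.hmap

/-- The preimage of `u ∈ T_Δ` under the induced tree homomorphism. -/
def preimage (h : TreeHom Γ arΓ Δ arΔ) (u : RTree Δ) : Set (RTree Γ) :=
  {t | t.WF arΓ ∧ h.apply t = u.map Sum.inl}

/-- The image `h(A)` of a weighted tree language `A` under `h`. -/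
noncomputable def image {S : Type} [CommSemiring S] (h : TreeHom Γ arΓ Δ arΔ)
    (A : RTree Γ → S) (u : RTree Δ) : S :=
  ∑ᶠ t ∈ h.preimage u, A t

end TreeHom

/-!
A WTGc satisfies a root recursion: the weight of `t` at `q` is the sum, over the productions `p`
with target `q` whose constraints hold at the root of `t`, of `wt p` times the total weight of the
left-most derivations of `t` to `lhs p`, and the latter factors over the children (`formWeight`).
The factorisation holds because a left-most derivation that never rewrites the root first works
entirely in the first subtree and then in the remaining ones; the same recursion shows that these
sets of derivations are finite.

The automaton `toWTAc` cuts each left-hand side into its one-symbol pieces, linked by fresh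
states, each of which is the target of exactly one piece, of weight `1` and without constraints.
By the root recursion for both grammars and induction on `t`, the fresh state at position `w` of
`lhs p` gives `t` the weight of matching `t` against `lhs p` below `w`, and the nonterminals of
`G` keep their weights.
-/

namespace RTree

variable {α : Type}

theorem node_induction {motive : RTree α → Prop}
    (ih : ∀ a ts, (∀ c ∈ ts, motive c) → motive (node a ts)) : ∀ t, motive t
  | node a ts => ih a ts fun c _ => node_induction ih c
termination_by t => sizeOf t
decreasing_by
  simp_wf
  have := List.sizeOf_lt_of_mem ‹c ∈ ts›
  omega

theorem map_node {β : Type} (f : α → β) (a : α) (ts : List (RTree α)) :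
    (node a ts).map f = node (f a) (ts.map (RTree.map f)) := by
  rw [RTree.map, List.attach_map_val]

@[simp] theorem subtreeAt_nil (t : RTree α) : t.subtreeAt [] = some t := by
  rw [subtreeAt]

@[simp] theorem subtreeAt_cons (a : α) (ts : List (RTree α)) (i : ℕ) (w : List ℕ) :
    (node a ts).subtreeAt (i :: w) = ts[i]?.bind (·.subtreeAt w) := by
  rw [subtreeAt]

theorem subtreeAt_append (t : RTree α) (u v : List ℕ) :
    t.subtreeAt (u ++ v) = (t.subtreeAt u).bind (·.subtreeAt v) := by
  induction u generalizing t with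
  | nil => simp
  | cons i u ih =>
    obtain ⟨a, ts⟩ := t
    simp [ih, Option.bind_assoc]

@[simp] theorem replaceAt_nil (t s : RTree α) : t.replaceAt [] s = s := by
  rw [replaceAt]

theorem replaceAt_cons (a : α) (ts : List (RTree α)) (i : ℕ) (w : List ℕ) (s : RTree α) :
    (node a ts).replaceAt (i :: w) s
      = node a (ts.mapIdx fun j c => if j = i then c.replaceAt w s else c) := by
  rw [replaceAt]

theorem replaceAt_cons_zero (a : α) (t₀ : RTree α) (ts : List (RTree α)) (w : List ℕ)
    (s : RTree α) :
    (node a (t₀ :: ts)).replaceAt (0 :: w) s = node a (t₀.replaceAt w s :: ts) := by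
  rw [replaceAt_cons, List.mapIdx_cons]
  simpa using List.ext_getElem (by simp) (by simp)

theorem replaceAt_cons_succ (a : α) (t₀ : RTree α) (ts : List (RTree α)) (i : ℕ)
    (w : List ℕ) (s : RTree α) :
    (node a (t₀ :: ts)).replaceAt ((i + 1) :: w) s
      = node a (t₀ :: ts.mapIdx fun j c => if j = i then c.replaceAt w s else c) := by
  rw [replaceAt_cons, List.mapIdx_cons]
  simp

theorem WF.subtreeAt {ar : α → ℕ} {t s : RTree α} {w : List ℕ} (ht : t.WF ar)
    (hs : t.subtreeAt w = some s) : s.WF ar := by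
  induction w generalizing t with
  | nil => simp_all
  | cons i w ih =>
    obtain ⟨hlen, hchildren⟩ := ht
    rw [subtreeAt_cons, Option.bind_eq_some_iff] at hs
    obtain ⟨c, hc, hcs⟩ := hs
    exact ih (hchildren c (List.mem_of_getElem? hc)) hcs

theorem finite_setOf_subtreeAt_isSome : ∀ t : RTree α, {w | (t.subtreeAt w).isSome}.Finite := by
  refine node_induction fun a ts ih => ?_
  refine ((Set.finite_iUnion fun i : Fin ts.length =>
    (ih _ (List.getElem_mem i.2)).image (i.1 :: ·)).insert []).subset ?_
  rintro (_ | ⟨i, w⟩) hw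
  · exact Set.mem_insert _ _
  · simp only [Set.mem_ofPred_eq, subtreeAt_cons, Option.isSome_bind] at hw
    obtain ⟨hi, hw⟩ : ∃ hi : i < ts.length, (ts[i].subtreeAt w).isSome := by
      cases h : ts[i]? <;> simp_all [List.getElem?_eq_some_iff]
      obtain ⟨hi, rfl⟩ := h
      exact ⟨hi, hw⟩
    exact Or.inr (Set.mem_iUnion.mpr ⟨⟨i, hi⟩, w, hw, rfl⟩)

end RTree

namespace PosLt

@[simp] theorem not_nil_left (v : List ℕ) : ¬ PosLt [] v := nofun

@[simp] theorem cons_nil (i : ℕ) (v : List ℕ) : PosLt (i :: v) [] := .ne_nil i v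

theorem cons_cons_iff {i j : ℕ} {v w : List ℕ} :
    PosLt (i :: v) (j :: w) ↔ i < j ∨ i = j ∧ PosLt v w := by
  constructor
  · rintro (_ | ⟨_, _, h⟩ | h)
    exacts [.inl h, .inr ⟨rfl, h⟩]
  · rintro (h | ⟨rfl, h⟩)
    exacts [.head _ _ h, .tail h]

theorem of_ne_nil {v : List ℕ} (hv : v ≠ []) : PosLt v [] := by
  obtain ⟨i, w, rfl⟩ := List.exists_cons_of_ne_nil hv
  exact cons_nil i w

end PosLt

/-- Turns positions of `node a ts` into the corresponding positions of `node a (t₀ :: ts)`. -/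
def succHead : List ℕ → List ℕ
  | [] => []
  | i :: v => (i + 1) :: v

theorem succHead_injective : Function.Injective succHead := by
  rintro (_ | ⟨i, v⟩) (_ | ⟨j, w⟩) h <;> simp_all [succHead]

theorem posLt_succHead_iff {v w : List ℕ} : PosLt (succHead v) (succHead w) ↔ PosLt v w := by
  cases v <;> cases w <;> simp [succHead, PosLt.cons_cons_iff]

section Leftmost

variable {P : Type}

theorem leftmost_iff {d : List (P × List ℕ)} : Leftmost d ↔ (d.map Prod.snd).IsChain PosLt :=
  Iff.rfl

theorem leftmost_map_iff {f : List ℕ → List ℕ} (hf : ∀ v w, PosLt (f v) (f w) ↔ PosLt v w)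
    (d : List (P × List ℕ)) : Leftmost (d.map (Prod.map id f)) ↔ Leftmost d := by
  rw [leftmost_iff, leftmost_iff, List.map_map,
    show Prod.snd ∘ Prod.map id f = f ∘ Prod.snd from rfl, ← List.map_map, List.isChain_map]
  simp only [hf]

theorem Leftmost.append_left {d e : List (P × List ℕ)} (h : Leftmost (d ++ e)) : Leftmost d := by
  rw [leftmost_iff, List.map_append, List.isChain_append] at h
  exact h.1

theorem Leftmost.append_right {d e : List (P × List ℕ)} (h : Leftmost (d ++ e)) :
    Leftmost e := by
  rw [leftmost_iff, List.map_append, List.isChain_append] at h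
  exact h.2.1

theorem Leftmost.append {d e : List (P × List ℕ)} (hd : Leftmost d) (he : Leftmost e)
    (hde : ∀ y ∈ d, ∀ z ∈ e, PosLt y.2 z.2) : Leftmost (d ++ e) := by
  rw [leftmost_iff, List.map_append, List.isChain_append]
  refine ⟨hd, he, fun v hv u hu => ?_⟩
  obtain ⟨y, hy, rfl⟩ := List.mem_map.mp (List.mem_of_mem_getLast? hv)
  obtain ⟨z, hz, rfl⟩ := List.mem_map.mp (List.mem_of_mem_head? hu)
  exact hde y hy z hz

/-- Embeds a derivation on `t₀` into `node a (t₀ :: ts)`. -/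
def liftHead (d : List (P × List ℕ)) : List (P × List ℕ) := d.map (Prod.map id (0 :: ·))

/-- Embeds a derivation on `node a ts` into `node a (t₀ :: ts)`. -/
def liftTail (d : List (P × List ℕ)) : List (P × List ℕ) := d.map (Prod.map id succHead)

theorem liftHead_cons (p : P) (w : List ℕ) (d : List (P × List ℕ)) :
    liftHead ((p, w) :: d) = (p, 0 :: w) :: liftHead d := rfl

theorem liftTail_cons (p : P) (w : List ℕ) (d : List (P × List ℕ)) :
    liftTail ((p, w) :: d) = (p, succHead w) :: liftTail d := rfl

theorem liftHead_injective : Function.Injective (liftHead (P := P)) :=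
  List.map_injective_iff.mpr (Function.injective_id.prodMap (List.cons_injective))

theorem liftTail_injective : Function.Injective (liftTail (P := P)) :=
  List.map_injective_iff.mpr (Function.injective_id.prodMap succHead_injective)

theorem leftmost_liftHead_iff {d : List (P × List ℕ)} : Leftmost (liftHead d) ↔ Leftmost d :=
  leftmost_map_iff (fun _ _ => by simp [PosLt.cons_cons_iff]) d

theorem leftmost_liftTail_iff {d : List (P × List ℕ)} : Leftmost (liftTail d) ↔ Leftmost d :=
  leftmost_map_iff (fun _ _ => posLt_succHead_iff) d

theorem leftmost_liftHead_append_liftTail {e₀ e₁ : List (P × List ℕ)} (h₀ : Leftmost e₀)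
    (h₁ : Leftmost e₁) (hne : ∀ y ∈ e₁, y.2 ≠ []) : Leftmost (liftHead e₀ ++ liftTail e₁) := by
  refine (leftmost_liftHead_iff.mpr h₀).append (leftmost_liftTail_iff.mpr h₁) ?_
  simp only [liftHead, liftTail, List.mem_map]
  rintro _ ⟨y, -, rfl⟩ _ ⟨z, hz, rfl⟩
  obtain ⟨i, w, hw⟩ := List.exists_cons_of_ne_nil (hne z hz)
  simp [hw, succHead, PosLt.cons_cons_iff]

theorem Leftmost.exists_liftHead_append_liftTail {d : List (P × List ℕ)} (hd : Leftmost d)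
    (hne : ∀ y ∈ d, y.2 ≠ []) :
    ∃ e₀ e₁, d = liftHead e₀ ++ liftTail e₁ ∧ ∀ y ∈ e₁, y.2 ≠ [] := by
  induction d with
  | nil => exact ⟨[], [], rfl, by simp⟩
  | cons y d ih =>
    obtain ⟨p, _ | ⟨j, w⟩⟩ := y
    · exact absurd rfl (hne _ List.mem_cons_self)
    obtain ⟨e₀, e₁, rfl, he₁⟩ :=
      ih (Leftmost.append_right (d := [_]) hd) fun y hy => hne y (List.mem_cons_of_mem _ hy)
    cases j with
    | zero => exact ⟨(p, w) :: e₀, e₁, rfl, he₁⟩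
    | succ k =>
      cases e₀ with
      | cons z e₀ =>
        rw [leftmost_iff] at hd
        have := (List.isChain_cons_cons.mp hd).1
        simp [PosLt.cons_cons_iff] at this
      | nil =>
        refine ⟨[], (p, k :: w) :: e₁, rfl, ?_⟩
        simpa using he₁

theorem liftHead_append_liftTail_inj {e₀ e₁ e₀' e₁' : List (P × List ℕ)}
    (hne : ∀ y ∈ e₁, y.2 ≠ []) (hne' : ∀ y ∈ e₁', y.2 ≠ [])
    (h : liftHead e₀ ++ liftTail e₁ = liftHead e₀' ++ liftTail e₁') : e₀ = e₀' ∧ e₁ = e₁' := by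
  have filter_eq : ∀ e₀ e₁ : List (P × List ℕ), (∀ y ∈ e₁, y.2 ≠ []) →
      (liftHead e₀ ++ liftTail e₁).filter (·.2.head? == some 0) = liftHead e₀ := by
    intro e₀ e₁ hne
    have head : ∀ y ∈ liftHead e₀, y.2.head? == some 0 := by
      simp only [liftHead, List.mem_map]
      rintro _ ⟨y, -, rfl⟩
      rfl
    rw [List.filter_append, List.filter_eq_self.mpr head, List.filter_eq_nil_iff.mpr,
      List.append_nil]
    simp only [liftTail, List.mem_map]
    rintro _ ⟨z, hz, rfl⟩
    obtain ⟨i, w, hw⟩ := List.exists_cons_of_ne_nil (hne z hz)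
    simp [hw, succHead]
  have h₀ : e₀ = e₀' := liftHead_injective (by rw [← filter_eq e₀ e₁ hne, h, filter_eq _ _ hne'])
  subst h₀
  exact ⟨rfl, liftTail_injective (List.append_cancel_left h)⟩

end Leftmost

theorem finsum_mem_prod_mul {S α β : Type} [CommSemiring S] {A : Set α} {B : Set β}
    (hA : A.Finite) (hB : B.Finite) (f : α → S) (g : β → S) :
    ∑ᶠ x ∈ A ×ˢ B, f x.1 * g x.2 = (∑ᶠ a ∈ A, f a) * ∑ᶠ b ∈ B, g b := by
  rw [← hA.coe_toFinset, ← hB.coe_toFinset, ← Finset.coe_product, finsum_mem_coe_finset,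
    finsum_mem_coe_finset, finsum_mem_coe_finset, Finset.sum_product, Finset.sum_mul_sum]

namespace WTGc

open RTree

variable {S : Type} [CommSemiring S] {Γ : Type} {ar : Γ → ℕ} {G : WTGc S Γ ar}

def ConstraintsHold (G : WTGc S Γ ar) (p : G.P) (t : RTree Γ) : Prop :=
  (∀ c ∈ G.eqc p, t.satC c) ∧ ∀ c ∈ G.nec p, ¬ t.satC c

theorem lhs_eq_node (G : WTGc S Γ ar) (p : G.P) :
    ∃ σ cs, G.lhs p = node (Sum.inl σ) cs ∧ cs.length = ar σ := by
  have hwf := G.lhs_wf p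
  rcases hp : G.lhs p with ⟨σ | q, cs⟩ <;> rw [hp] at hwf <;> obtain ⟨hlen, -⟩ := hwf
  · exact ⟨σ, cs, rfl, hlen⟩
  · obtain rfl : cs = [] := List.eq_nil_of_length_eq_zero hlen
    exact absurd hp (G.lhs_ne p q)

section Derivations

variable {t : RTree Γ} {ξ ζ η : RTree (Γ ⊕ G.Q)} {p : G.P} {d : List (G.P × List ℕ)}

theorem step_nil_iff :
    G.Step t ξ p [] ζ ↔
      ξ = G.lhs p ∧ ζ = node (Sum.inr (G.tgt p)) [] ∧ G.ConstraintsHold p t := by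
  simp [Step, ConstraintsHold]

theorem not_step_leaf {q : G.Q} {w : List ℕ} : ¬ G.Step t (node (Sum.inr q) []) p w ζ := by
  rintro ⟨h, -⟩
  cases w with
  | nil => exact G.lhs_ne p q (Option.some_inj.mp (by simpa using h)).symm
  | cons i w => simp at h

theorem Derives.eq_of_nil (h : G.Derives t ξ [] η) : η = ξ := by
  cases h
  rfl

theorem Derives.of_leaf {q : G.Q} (h : G.Derives t (node (Sum.inr q) []) d η) :
    d = [] ∧ η = node (Sum.inr q) [] := by
  cases h with
  | refl => exact ⟨rfl, rfl⟩
  | step hs _ => exact absurd hs not_step_leaf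

theorem Derives.append {d' : List (G.P × List ℕ)} (h : G.Derives t ξ d ζ)
    (h' : G.Derives t ζ d' η) : G.Derives t ξ (d ++ d') η := by
  induction h with
  | refl => exact h'
  | step hs _ ih => exact .step hs (ih h')

theorem Derives.exists_of_append {d' : List (G.P × List ℕ)} (h : G.Derives t ξ (d ++ d') η) :
    ∃ ζ, G.Derives t ξ d ζ ∧ G.Derives t ζ d' η := by
  induction d generalizing ξ with
  | nil => exact ⟨ξ, .refl ξ, h⟩
  | cons y d ih =>
    cases h with
    | step hs h =>
      obtain ⟨ζ, h₁, h₂⟩ := ih h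
      exact ⟨ζ, .step hs h₁, h₂⟩

theorem Step.exists_node_of_cons {x : Γ ⊕ G.Q} {ξs : List (RTree (Γ ⊕ G.Q))} {i : ℕ}
    {w : List ℕ} (h : G.Step t (node x ξs) p (i :: w) ζ) :
    ∃ ζs : List _, ζ = node x ζs ∧ ζs.length = ξs.length := by
  obtain ⟨-, rfl, -⟩ := h
  exact ⟨_, replaceAt_cons .., by simp⟩

theorem Derives.keeps_inl_root {x : Γ ⊕ G.Q} {ξs ηs : List (RTree (Γ ⊕ G.Q))} {σ : Γ}
    (h : G.Derives t (node x ξs) d (node (Sum.inl σ) ηs)) :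
    x = Sum.inl σ ∧ ηs.length = ξs.length ∧ ∀ y ∈ d, y.2 ≠ [] := by
  induction d generalizing x ξs with
  | nil =>
    cases h.eq_of_nil
    exact ⟨rfl, rfl, by simp⟩
  | cons y d ih =>
    obtain ⟨p, w⟩ := y
    cases h with
    | step hs h =>
      cases w with
      | nil =>
        obtain ⟨-, rfl, -⟩ := step_nil_iff.mp hs
        cases h.of_leaf.2
      | cons i w =>
        obtain ⟨ζs, rfl, hlen⟩ := hs.exists_node_of_cons
        obtain ⟨hx, hηs, hne⟩ := ih h
        exact ⟨hx, hηs.trans hlen, by simpa using hne⟩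

theorem Derives.exists_eq_append_root {σ : Γ} {ξs ηs : List (RTree (Γ ⊕ G.Q))} {q : G.Q}
    (h : G.Derives t (node (Sum.inl σ) ξs) d (node (Sum.inr q) ηs)) :
    ∃ d' p, d = d' ++ [(p, [])] ∧ ηs = [] ∧ G.tgt p = q ∧ G.ConstraintsHold p t ∧
      G.Derives t (node (Sum.inl σ) ξs) d' (G.lhs p) := by
  induction d generalizing ξs with
  | nil => cases h.eq_of_nil
  | cons y d ih =>
    obtain ⟨p, w⟩ := y
    cases h with
    | step hs h =>
      cases w with
      | nil =>
        obtain ⟨hξ, rfl, hp⟩ := step_nil_iff.mp hs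
        obtain ⟨rfl, hη⟩ := h.of_leaf
        cases hη
        exact ⟨[], p, rfl, rfl, rfl, hp, hξ ▸ .refl _⟩
      | cons i w =>
        obtain ⟨ζs, rfl, -⟩ := hs.exists_node_of_cons
        obtain ⟨d', p', rfl, hηs, hq, hp', h'⟩ := ih h
        exact ⟨(p, i :: w) :: d', p', rfl, hηs, hq, hp', .step hs h'⟩

end Derivations

section Children

variable {a : Γ} {t₀ : RTree Γ} {tr : List (RTree Γ)} {x : Γ ⊕ G.Q}
  {ξ₀ : RTree (Γ ⊕ G.Q)} {ξr : List (RTree (Γ ⊕ G.Q))} {p : G.P} {w : List ℕ}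
  {ζ : RTree (Γ ⊕ G.Q)}

theorem step_cons_zero_iff :
    G.Step (node a (t₀ :: tr)) (node x (ξ₀ :: ξr)) p (0 :: w) ζ ↔
      ∃ ζ₀, G.Step t₀ ξ₀ p w ζ₀ ∧ ζ = node x (ζ₀ :: ξr) := by
  simp only [Step, subtreeAt_cons, List.getElem?_cons_zero, Option.bind_some,
    replaceAt_cons_zero]
  constructor
  · rintro ⟨h₁, rfl, h₃⟩
    exact ⟨_, ⟨h₁, rfl, h₃⟩, rfl⟩
  · rintro ⟨ζ₀, ⟨h₁, rfl, h₃⟩, rfl⟩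
    exact ⟨h₁, rfl, h₃⟩

theorem step_cons_succ_iff {i : ℕ} :
    G.Step (node a (t₀ :: tr)) (node x (ξ₀ :: ξr)) p ((i + 1) :: w) ζ ↔
      ∃ ζr, G.Step (node a tr) (node x ξr) p (i :: w) (node x ζr) ∧
        ζ = node x (ξ₀ :: ζr) := by
  simp only [Step, subtreeAt_cons, List.getElem?_cons_succ, replaceAt_cons_succ]
  simp only [replaceAt_cons, node.injEq, true_and]
  constructor
  · rintro ⟨h₁, rfl, h₃⟩
    exact ⟨_, ⟨h₁, rfl, h₃⟩, rfl⟩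
  · rintro ⟨ζr, ⟨h₁, rfl, h₃⟩, rfl⟩
    exact ⟨h₁, rfl, h₃⟩

theorem derives_liftHead_iff {e : List (G.P × List ℕ)} {η : RTree (Γ ⊕ G.Q)} :
    G.Derives (node a (t₀ :: tr)) (node x (ξ₀ :: ξr)) (liftHead e) η ↔
      ∃ η₀, G.Derives t₀ ξ₀ e η₀ ∧ η = node x (η₀ :: ξr) := by
  induction e generalizing ξ₀ with
  | nil =>
    constructor
    · intro h
      exact ⟨ξ₀, .refl _, h.eq_of_nil⟩
    · rintro ⟨η₀, h, rfl⟩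
      cases h.eq_of_nil
      exact .refl _
  | cons y e ih =>
    rw [liftHead_cons]
    constructor
    · rintro (_ | ⟨hs, h⟩)
      obtain ⟨ζ₀, hs₀, rfl⟩ := step_cons_zero_iff.mp hs
      obtain ⟨η₀, h₀, rfl⟩ := ih.mp h
      exact ⟨η₀, .step hs₀ h₀, rfl⟩
    · rintro ⟨η₀, _ | ⟨hs, h⟩, rfl⟩
      exact .step (step_cons_zero_iff.mpr ⟨_, hs, rfl⟩) (ih.mpr ⟨η₀, h, rfl⟩)

theorem derives_liftTail_iff {e : List (G.P × List ℕ)} (hne : ∀ y ∈ e, y.2 ≠ [])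
    {η : RTree (Γ ⊕ G.Q)} :
    G.Derives (node a (t₀ :: tr)) (node x (ξ₀ :: ξr)) (liftTail e) η ↔
      ∃ ηr, G.Derives (node a tr) (node x ξr) e (node x ηr) ∧ η = node x (ξ₀ :: ηr) := by
  induction e generalizing ξr with
  | nil =>
    constructor
    · intro h
      exact ⟨ξr, .refl _, h.eq_of_nil⟩
    · rintro ⟨ηr, h, rfl⟩
      cases h.eq_of_nil
      exact .refl _
  | cons y e ih =>
    obtain ⟨p, _ | ⟨i, w⟩⟩ := y
    · exact absurd rfl (hne _ List.mem_cons_self)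
    have hne' : ∀ y ∈ e, y.2 ≠ [] := fun y hy => hne y (List.mem_cons_of_mem _ hy)
    rw [liftTail_cons]
    constructor
    · rintro (_ | ⟨hs, h⟩)
      obtain ⟨ζr, hsr, rfl⟩ := step_cons_succ_iff.mp hs
      obtain ⟨ηr, hr, rfl⟩ := (ih hne').mp h
      exact ⟨ηr, .step hsr hr, rfl⟩
    · rintro ⟨ηr, _ | ⟨hs, h⟩, rfl⟩
      obtain ⟨ζr, rfl, -⟩ := hs.exists_node_of_cons
      exact .step (step_cons_succ_iff.mpr ⟨ζr, hs, rfl⟩) ((ih hne').mpr ⟨ηr, h, rfl⟩)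

end Children

def leftmostDerivs (G : WTGc S Γ ar) (t : RTree Γ) (ℓ : RTree (Γ ⊕ G.Q)) :
    Set (List (G.P × List ℕ)) :=
  {d | G.Derives t (t.map Sum.inl) d ℓ ∧ Leftmost d}

section LeftmostDerivs

variable {a b : Γ} {ts : List (RTree Γ)} {ℓs : List (RTree (Γ ⊕ G.Q))}

theorem ne_nil_of_mem_leftmostDerivs {d : List (G.P × List ℕ)}
    (hd : d ∈ G.leftmostDerivs (node a ts) (node (Sum.inl b) ℓs)) : ∀ y ∈ d, y.2 ≠ [] := by
  have h := hd.1
  rw [map_node] at h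
  exact h.keeps_inl_root.2.2

theorem leftmostDerivs_eq_empty_of_mismatch (h : ¬ (b = a ∧ ℓs.length = ts.length)) :
    G.leftmostDerivs (node a ts) (node (Sum.inl b) ℓs) = ∅ := by
  refine Set.eq_empty_of_forall_notMem fun d ⟨hd, _⟩ => h ?_
  rw [map_node] at hd
  obtain ⟨hab, hlen, -⟩ := hd.keeps_inl_root
  exact ⟨(Sum.inl_injective hab).symm, by simpa using hlen⟩

theorem leftmostDerivs_leaf_cons {t : RTree Γ} {q : G.Q} {c : RTree (Γ ⊕ G.Q)} :
    G.leftmostDerivs t (node (Sum.inr q) (c :: ℓs)) = ∅ := by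
  refine Set.eq_empty_of_forall_notMem fun d ⟨hd, _⟩ => ?_
  obtain ⟨a, ts⟩ := t
  rw [map_node] at hd
  obtain ⟨-, -, -, h, -⟩ := hd.exists_eq_append_root
  cases h

theorem leftmostDerivs_nil_nil : G.leftmostDerivs (node a []) (node (Sum.inl a) []) = {[]} := by
  refine Set.eq_singleton_iff_unique_mem.mpr ⟨⟨by simpa [map_node] using .refl _, by
    simp [leftmost_iff]⟩, fun d hd => ?_⟩
  obtain _ | ⟨⟨p, w⟩, d⟩ := d
  · rfl
  obtain _ | ⟨i, w⟩ := w
  · exact absurd rfl (ne_nil_of_mem_leftmostDerivs hd _ List.mem_cons_self)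
  obtain ⟨h, -⟩ := hd
  rw [map_node] at h
  obtain _ | ⟨⟨hs, -⟩, -⟩ := h
  simp at hs

theorem leftmostDerivs_cons_cons (t₀ : RTree Γ) (tr : List (RTree Γ))
    (ℓ₀ : RTree (Γ ⊕ G.Q)) (ℓr : List (RTree (Γ ⊕ G.Q))) :
    G.leftmostDerivs (node a (t₀ :: tr)) (node (Sum.inl a) (ℓ₀ :: ℓr)) =
      (fun e => liftHead e.1 ++ liftTail e.2) ''
        (G.leftmostDerivs t₀ ℓ₀ ×ˢ G.leftmostDerivs (node a tr) (node (Sum.inl a) ℓr)) := by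
  ext d
  constructor
  · intro hd
    obtain ⟨e₀, e₁, rfl, he₁⟩ :=
      hd.2.exists_liftHead_append_liftTail (ne_nil_of_mem_leftmostDerivs hd)
    obtain ⟨hder, hlm⟩ := hd
    rw [map_node, List.map_cons] at hder
    obtain ⟨ζ, hζ₀, hζ₁⟩ := hder.exists_of_append
    obtain ⟨η₀, h₀, rfl⟩ := derives_liftHead_iff.mp hζ₀
    obtain ⟨ηr, h₁, hη⟩ := (derives_liftTail_iff he₁).mp hζ₁
    obtain ⟨rfl, rfl⟩ : ℓ₀ = η₀ ∧ ℓr = ηr := by simpa using hη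
    refine ⟨(e₀, e₁), ⟨⟨h₀, leftmost_liftHead_iff.mp hlm.append_left⟩,
      ⟨by rwa [map_node], leftmost_liftTail_iff.mp hlm.append_right⟩⟩, rfl⟩
  · rintro ⟨⟨e₀, e₁⟩, ⟨⟨h₀, hlm₀⟩, hd₁⟩, rfl⟩
    have he₁ := ne_nil_of_mem_leftmostDerivs hd₁
    obtain ⟨h₁, hlm₁⟩ := hd₁
    rw [map_node] at h₁
    refine ⟨?_, leftmost_liftHead_append_liftTail hlm₀ hlm₁ he₁⟩
    rw [map_node, List.map_cons]
    exact (derives_liftHead_iff.mpr ⟨_, h₀, rfl⟩).append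
      ((derives_liftTail_iff he₁).mpr ⟨_, h₁, rfl⟩)

/-- A complete derivation ends with a single step at the root. -/
theorem D_eq_biUnion (q : G.Q) (t : RTree Γ) :
    G.D q t = ⋃ p ∈ {p | G.tgt p = q ∧ G.ConstraintsHold p t},
      (· ++ [(p, [])]) '' G.leftmostDerivs t (G.lhs p) := by
  obtain ⟨a, ts⟩ := t
  ext d
  simp only [Set.mem_iUnion, Set.mem_image, Set.mem_ofPred_eq, exists_prop]
  constructor
  · rintro ⟨hder, hlm⟩
    rw [map_node] at hder
    obtain ⟨d', p, rfl, -, hq, hp, h'⟩ := hder.exists_eq_append_root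
    exact ⟨p, ⟨hq, hp⟩, d', ⟨by rwa [map_node], hlm.append_left⟩, rfl⟩
  · rintro ⟨p, ⟨rfl, hp⟩, d', hd', rfl⟩
    obtain ⟨σ, cs, hσ, -⟩ := G.lhs_eq_node p
    have hne := ne_nil_of_mem_leftmostDerivs (hσ ▸ hd')
    refine ⟨hd'.1.append (.step (step_nil_iff.mpr ⟨rfl, rfl, hp⟩) (.refl _)),
      hd'.2.append (by simp [leftmost_iff]) ?_⟩
    simpa using fun y hy => PosLt.of_ne_nil (hne y hy)

end LeftmostDerivs

theorem wtD_append (d e : List (G.P × List ℕ)) : G.wtD (d ++ e) = G.wtD d * G.wtD e := by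
  simp [wtD]

theorem wtD_liftHead (d : List (G.P × List ℕ)) : G.wtD (liftHead d) = G.wtD d := by
  simp [wtD, liftHead, Function.comp_def]

theorem wtD_liftTail (d : List (G.P × List ℕ)) : G.wtD (liftTail d) = G.wtD d := by
  simp [wtD, liftTail, Function.comp_def]

open Classical in
/-- The total weight of the left-most derivations of `t` to the sentential form `ℓ`, computed
by recursion on `ℓ` (this is `finsum_leftmostDerivs`). -/
noncomputable def formWeight (G : WTGc S Γ ar) : RTree (Γ ⊕ G.Q) → RTree Γ → S
  | node (Sum.inr q) [], t => G.qWeight q t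
  | node (Sum.inr _) (_ :: _), _ => 0
  | node (Sum.inl a) ℓs, node b ts =>
      if a = b ∧ ℓs.length = ts.length then
        (List.zipWith (fun (c : {c // c ∈ ℓs}) u => formWeight G c.1 u) ℓs.attach ts).prod
      else 0
termination_by ℓ => sizeOf ℓ
decreasing_by
  simp_wf
  have := List.sizeOf_lt_of_mem c.2
  omega

theorem formWeight_leaf (q : G.Q) (t : RTree Γ) :
    G.formWeight (node (Sum.inr q) []) t = G.qWeight q t := by
  rw [formWeight]

theorem formWeight_leaf_cons (q : G.Q) (c : RTree (Γ ⊕ G.Q)) (ℓs : List (RTree (Γ ⊕ G.Q)))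
    (t : RTree Γ) : G.formWeight (node (Sum.inr q) (c :: ℓs)) t = 0 := by
  rw [formWeight]

open Classical in
theorem formWeight_inl (a : Γ) (ℓs : List (RTree (Γ ⊕ G.Q))) (b : Γ) (ts : List (RTree Γ)) :
    G.formWeight (node (Sum.inl a) ℓs) (node b ts) =
      if a = b ∧ ℓs.length = ts.length then (List.zipWith G.formWeight ℓs ts).prod else 0 := by
  rw [formWeight]
  conv_rhs => rw [← List.attach_map_subtype_val ℓs, List.zipWith_map_left]
  rw [List.length_map, List.length_attach]

theorem formWeight_nil_nil (a : Γ) : G.formWeight (node (Sum.inl a) []) (node a []) = 1 := by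
  simp [formWeight_inl]

theorem formWeight_cons_cons (a b : Γ) (ℓ₀ : RTree (Γ ⊕ G.Q)) (ℓr : List (RTree (Γ ⊕ G.Q)))
    (t₀ : RTree Γ) (tr : List (RTree Γ)) :
    G.formWeight (node (Sum.inl a) (ℓ₀ :: ℓr)) (node b (t₀ :: tr)) =
      G.formWeight ℓ₀ t₀ * G.formWeight (node (Sum.inl a) ℓr) (node b tr) := by
  simp only [formWeight_inl, List.length_cons, add_left_inj, List.zipWith_cons_cons,
    List.prod_cons]
  split_ifs <;> simp_all

def SumsTo (G : WTGc S Γ ar) (A : Set (List (G.P × List ℕ))) (s : S) : Prop :=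
  A.Finite ∧ ∑ᶠ d ∈ A, G.wtD d = s

section SumsTo

variable {a b : Γ} {ts : List (RTree Γ)} {ℓs : List (RTree (Γ ⊕ G.Q))}

theorem sumsTo_leftmostDerivs_of_mismatch (h : ¬ (b = a ∧ ℓs.length = ts.length)) :
    G.SumsTo (G.leftmostDerivs (node a ts) (node (Sum.inl b) ℓs))
      (G.formWeight (node (Sum.inl b) ℓs) (node a ts)) := by
  rw [leftmostDerivs_eq_empty_of_mismatch h, formWeight_inl, if_neg h]
  exact ⟨Set.finite_empty, finsum_mem_empty⟩

theorem SumsTo.liftHead_append_liftTail {t₀ : RTree Γ} {tr : List (RTree Γ)}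
    {ℓ₀ : RTree (Γ ⊕ G.Q)} {ℓr : List (RTree (Γ ⊕ G.Q))} {s₀ sr : S}
    (h₀ : G.SumsTo (G.leftmostDerivs t₀ ℓ₀) s₀)
    (hr : G.SumsTo (G.leftmostDerivs (node a tr) (node (Sum.inl a) ℓr)) sr) :
    G.SumsTo ((fun e => liftHead e.1 ++ liftTail e.2) ''
      (G.leftmostDerivs t₀ ℓ₀ ×ˢ G.leftmostDerivs (node a tr) (node (Sum.inl a) ℓr)))
      (s₀ * sr) := by
  refine ⟨(h₀.1.prod hr.1).image _, ?_⟩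
  rw [finsum_mem_image]
  · simp only [wtD_append, wtD_liftHead, wtD_liftTail]
    rw [finsum_mem_prod_mul h₀.1 hr.1, h₀.2, hr.2]
  · rintro ⟨e₀, e₁⟩ ⟨-, he₁⟩ ⟨e₀', e₁'⟩ ⟨-, he₁'⟩ h
    obtain ⟨rfl, rfl⟩ := liftHead_append_liftTail_inj (ne_nil_of_mem_leftmostDerivs he₁)
      (ne_nil_of_mem_leftmostDerivs he₁') h
    rfl

theorem sumsTo_leftmostDerivs_inl
    (hts : ∀ u ∈ ts, ∀ ℓ, G.SumsTo (G.leftmostDerivs u ℓ) (G.formWeight ℓ u)) :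
    G.SumsTo (G.leftmostDerivs (node a ts) (node (Sum.inl b) ℓs))
      (G.formWeight (node (Sum.inl b) ℓs) (node a ts)) := by
  by_cases h : b = a ∧ ℓs.length = ts.length
  swap
  · exact sumsTo_leftmostDerivs_of_mismatch h
  obtain ⟨rfl, hlen⟩ := h
  induction ts generalizing ℓs with
  | nil =>
    obtain rfl := List.eq_nil_of_length_eq_zero hlen
    rw [leftmostDerivs_nil_nil, formWeight_nil_nil]
    exact ⟨Set.finite_singleton _, by simp [wtD]⟩
  | cons t₀ tr ih =>
    obtain _ | ⟨ℓ₀, ℓr⟩ := ℓs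
    · simp at hlen
    rw [leftmostDerivs_cons_cons, formWeight_cons_cons]
    exact (hts t₀ List.mem_cons_self ℓ₀).liftHead_append_liftTail
      (ih (fun u hu => hts u (List.mem_cons_of_mem _ hu)) (by simpa using hlen))

theorem finite_D_of_forall_finite {q : G.Q} {t : RTree Γ}
    (h : ∀ p, (G.leftmostDerivs t (G.lhs p)).Finite) : (G.D q t).Finite := by
  have := G.finP
  rw [D_eq_biUnion]
  exact (Set.toFinite _).biUnion fun p _ => (h p).image _

theorem sumsTo_leftmostDerivs (t : RTree Γ) (ℓ : RTree (Γ ⊕ G.Q)) :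
    G.SumsTo (G.leftmostDerivs t ℓ) (G.formWeight ℓ t) := by
  induction t using RTree.node_induction generalizing ℓ with
  | ih a ts ih =>
    rcases ℓ with ⟨b | q, _ | ⟨c, ℓs⟩⟩
    · exact sumsTo_leftmostDerivs_inl ih
    · exact sumsTo_leftmostDerivs_inl ih
    · refine ⟨finite_D_of_forall_finite fun p => ?_, (formWeight_leaf q _).symm⟩
      obtain ⟨σ, cs, hσ, -⟩ := G.lhs_eq_node p
      exact hσ ▸ (sumsTo_leftmostDerivs_inl ih).1
    · rw [leftmostDerivs_leaf_cons, formWeight_leaf_cons]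
      exact ⟨Set.finite_empty, finsum_mem_empty⟩

end SumsTo

theorem finsum_leftmostDerivs (t : RTree Γ) (ℓ : RTree (Γ ⊕ G.Q)) :
    ∑ᶠ d ∈ G.leftmostDerivs t ℓ, G.wtD d = G.formWeight ℓ t :=
  (sumsTo_leftmostDerivs t ℓ).2

theorem qWeight_eq_finsum (q : G.Q) (t : RTree Γ) :
    G.qWeight q t = ∑ᶠ p ∈ {p | G.tgt p = q ∧ G.ConstraintsHold p t},
      G.wt p * G.formWeight (G.lhs p) t := by
  have := G.finP
  have hfin : ∀ p, (G.leftmostDerivs t (G.lhs p)).Finite := fun p =>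
    (sumsTo_leftmostDerivs t (G.lhs p)).1
  have hdisj : Set.PairwiseDisjoint {p | G.tgt p = q ∧ G.ConstraintsHold p t}
      fun p => (· ++ [(p, [])]) '' G.leftmostDerivs t (G.lhs p) := by
    rintro p - p' - hne
    refine Set.disjoint_left.mpr ?_
    rintro _ ⟨d, -, rfl⟩ ⟨d', -, h⟩
    have := congrArg List.getLast? h
    simp only [List.getLast?_concat, Option.some.injEq, Prod.mk.injEq, and_true] at this
    exact hne this.symm
  rw [qWeight, D_eq_biUnion,
    finsum_mem_biUnion hdisj (Set.toFinite _) fun p _ => (hfin p).image _]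
  refine finsum_mem_congr rfl fun p _ => ?_
  rw [finsum_mem_image fun _ _ _ _ => List.append_cancel_right]
  simp only [wtD_append]
  rw [← finsum_mem_mul' _ _ (hfin p), finsum_leftmostDerivs, mul_comm]
  simp [wtD]

def IsTermPos {Q : Type} (ℓ : RTree (Γ ⊕ Q)) (w : List ℕ) : Prop :=
  ∃ σ cs, ℓ.subtreeAt w = some (node (Sum.inl σ) cs)

structure TermPos (G : WTGc S Γ ar) : Type where
  prod : G.P
  pos : List ℕ
  isTermPos : IsTermPos (G.lhs prod) pos

theorem finite_termPos (G : WTGc S Γ ar) : Finite G.TermPos := by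
  have := G.finP
  have (p : G.P) : Finite {w // IsTermPos (G.lhs p) w} := by
    refine ((G.lhs p).finite_setOf_subtreeAt_isSome.subset ?_).to_subtype
    rintro w ⟨σ, cs, h⟩
    simp [h]
  refine Finite.of_injective (β := Σ p, {w // IsTermPos (G.lhs p) w})
    (fun x => ⟨x.prod, x.pos, x.isTermPos⟩) ?_
  rintro ⟨p, w, hw⟩ ⟨p', w', hw'⟩ h
  simp only [Sigma.mk.injEq] at h
  obtain ⟨rfl, h⟩ := h
  cases Subtype.ext_iff.mp (eq_of_heq h)
  rfl

namespace TermPos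

noncomputable def sym (x : G.TermPos) : Γ := x.isTermPos.choose

noncomputable def children (x : G.TermPos) : List (RTree (Γ ⊕ G.Q)) :=
  x.isTermPos.choose_spec.choose

theorem subtreeAt_eq (x : G.TermPos) :
    (G.lhs x.prod).subtreeAt x.pos = some (node (Sum.inl x.sym) x.children) :=
  x.isTermPos.choose_spec.choose_spec

theorem node_eq_of_subtreeAt_eq {x : G.TermPos} {s : RTree (Γ ⊕ G.Q)}
    (h : (G.lhs x.prod).subtreeAt x.pos = some s) : node (Sum.inl x.sym) x.children = s :=
  Option.some_injective _ (x.subtreeAt_eq.symm.trans h)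

end TermPos

theorem isTermPos_nil (G : WTGc S Γ ar) (p : G.P) : IsTermPos (G.lhs p) [] := by
  obtain ⟨σ, cs, h, -⟩ := G.lhs_eq_node p
  exact ⟨σ, cs, by rw [h, subtreeAt_nil]⟩

def rootPos (G : WTGc S Γ ar) (p : G.P) : G.TermPos := ⟨p, [], G.isTermPos_nil p⟩

theorem rootPos_injective : Function.Injective G.rootPos :=
  fun _ _ h => congrArg TermPos.prod h

theorem eq_rootPos_of_nil {x : G.TermPos} (hx : x.pos = []) : x = G.rootPos x.prod := by
  obtain ⟨p, w, hw⟩ := x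
  cases hx
  rfl

theorem node_rootPos (p : G.P) :
    node (Sum.inl (G.rootPos p).sym) (G.rootPos p).children = G.lhs p :=
  TermPos.node_eq_of_subtreeAt_eq (subtreeAt_nil _)

noncomputable def childState (x : G.TermPos) (j : ℕ) : G.Q ⊕ G.TermPos :=
  match h : (G.lhs x.prod).subtreeAt (x.pos ++ [j]) with
  | some (node (Sum.inr q) _) => Sum.inl q
  | some (node (Sum.inl σ) cs) => Sum.inr ⟨x.prod, x.pos ++ [j], σ, cs, h⟩
  | none => Sum.inl (G.tgt x.prod) -- unreachable for `j < x.children.length`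

theorem childState_of_inr {x : G.TermPos} {j : ℕ} {q : G.Q} {cs : List (RTree (Γ ⊕ G.Q))}
    (h : (G.lhs x.prod).subtreeAt (x.pos ++ [j]) = some (node (Sum.inr q) cs)) :
    G.childState x j = Sum.inl q := by
  unfold childState
  split <;> simp_all

theorem childState_of_inl {x : G.TermPos} {j : ℕ} {σ : Γ} {cs : List (RTree (Γ ⊕ G.Q))}
    (h : (G.lhs x.prod).subtreeAt (x.pos ++ [j]) = some (node (Sum.inl σ) cs)) :
    G.childState x j = Sum.inr ⟨x.prod, x.pos ++ [j], σ, cs, h⟩ := by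
  unfold childState
  split <;> simp_all

/-- Every `Γ`-labelled position `x` of a left-hand side becomes a normalized production with
target state `x` and weight `1`; at the root it instead takes over the target, the constraints
and the weight of the original production. -/
@[reducible] noncomputable def toWTAc (G : WTGc S Γ ar) : WTGc S Γ ar where
  Q := G.Q ⊕ G.TermPos
  P := G.TermPos
  finQ := have := G.finQ; have := G.finite_termPos; inferInstance
  finP := G.finite_termPos
  final := Sum.elim G.final 0
  lhs x := node (Sum.inl x.sym)
    ((List.ofFn fun j : Fin x.children.length => G.childState x j).map
      fun s => node (Sum.inr s) [])
  tgt x := if x.pos = [] then Sum.inl (G.tgt x.prod) else Sum.inr x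
  eqc x := if x.pos = [] then G.eqc x.prod else ∅
  nec x := if x.pos = [] then G.nec x.prod else ∅
  wt x := if x.pos = [] then G.wt x.prod else 1
  lhs_wf x := by
    obtain ⟨hlen, -⟩ := (G.lhs_wf x.prod).subtreeAt x.subtreeAt_eq
    refine .node (by simpa using hlen) ?_
    simp only [List.mem_map, List.mem_ofFn]
    rintro _ ⟨_, -, rfl⟩
    exact .node rfl (by simp)
  lhs_ne x q := by simp

theorem toWTAc_lhs (x : G.TermPos) :
    G.toWTAc.lhs x = node (Sum.inl x.sym)
      ((List.ofFn fun j : Fin x.children.length => G.childState x j).map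
        fun s => node (Sum.inr s) []) := rfl

theorem toWTAc_isWTAc (G : WTGc S Γ ar) : G.toWTAc.IsWTAc :=
  fun (x : G.TermPos) =>
    ⟨x.sym, List.ofFn fun j : Fin x.children.length => G.childState x j, rfl⟩

theorem toWTAc_positive (hG : G.Positive) : G.toWTAc.Positive := by
  intro (x : G.TermPos)
  show (if x.pos = [] then G.nec x.prod else ∅) = ∅
  split_ifs
  exacts [hG x.prod, rfl]

section toWTAc

variable {x : G.TermPos} {p : G.P} {t : RTree Γ}

theorem toWTAc_tgt_rootPos : G.toWTAc.tgt (G.rootPos p) = Sum.inl (G.tgt p) := by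
  simp [rootPos]

theorem toWTAc_wt_rootPos : G.toWTAc.wt (G.rootPos p) = G.wt p := by
  simp [rootPos]

theorem constraintsHold_toWTAc_rootPos :
    G.toWTAc.ConstraintsHold (G.rootPos p) t ↔ G.ConstraintsHold p t := by
  simp only [ConstraintsHold]
  rfl

theorem toWTAc_tgt_of_ne_nil (hx : x.pos ≠ []) : G.toWTAc.tgt x = Sum.inr x := if_neg hx

theorem toWTAc_wt_of_ne_nil (hx : x.pos ≠ []) : G.toWTAc.wt x = 1 := if_neg hx

theorem constraintsHold_toWTAc_of_ne_nil (hx : x.pos ≠ []) : G.toWTAc.ConstraintsHold x t := by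
  refine ⟨fun c hc => ?_, fun c hc => ?_⟩ <;>
  · change c ∈ if x.pos = [] then _ else ∅ at hc
    simp [hx] at hc

def WeightsAgree (G : WTGc S Γ ar) (t : RTree Γ) : Prop :=
  (∀ q, G.toWTAc.qWeight (Sum.inl q) t = G.qWeight q t) ∧
    ∀ y : G.TermPos, y.pos ≠ [] →
      G.toWTAc.qWeight (Sum.inr y) t = G.formWeight (node (Sum.inl y.sym) y.children) t

theorem qWeight_toWTAc_childState {j : ℕ} (hj : j < x.children.length) {u : RTree Γ}
    (hu : G.WeightsAgree u) :
    G.toWTAc.qWeight (G.childState x j) u = G.formWeight x.children[j] u := by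
  have hsub : (G.lhs x.prod).subtreeAt (x.pos ++ [j]) = some x.children[j] := by
    simp [subtreeAt_append, x.subtreeAt_eq, hj]
  rcases hc : x.children[j] with ⟨σ | q, cs⟩ <;> rw [hc] at hsub
  · rw [childState_of_inl hsub, hu.2 _ (by simp), TermPos.node_eq_of_subtreeAt_eq hsub]
  · obtain ⟨hlen, -⟩ := (G.lhs_wf x.prod).subtreeAt hsub
    obtain rfl : cs = [] := List.eq_nil_of_length_eq_zero hlen
    rw [childState_of_inr hsub, hu.1, formWeight_leaf]

theorem formWeight_toWTAc_lhs {b : Γ} {ts : List (RTree Γ)}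
    (hts : ∀ u ∈ ts, G.WeightsAgree u) :
    G.toWTAc.formWeight (G.toWTAc.lhs x) (node b ts) =
      G.formWeight (node (Sum.inl x.sym) x.children) (node b ts) := by
  rw [toWTAc_lhs, formWeight_inl, formWeight_inl]
  rw [List.length_map, List.length_ofFn]
  split_ifs with h
  · congr 1
    refine List.ext_getElem (by simp) fun j h₁ h₂ => ?_
    simp only [List.getElem_zipWith, List.getElem_map, List.getElem_ofFn]
    exact (formWeight_leaf (G := G.toWTAc) _ _).trans
      (qWeight_toWTAc_childState (by simp at h₂; exact h₂.1) (hts _ (List.getElem_mem _)))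
  · rfl

theorem qWeight_toWTAc_inl
    (ht : ∀ x, G.toWTAc.formWeight (G.toWTAc.lhs x) t =
      G.formWeight (node (Sum.inl x.sym) x.children) t) (q : G.Q) :
    G.toWTAc.qWeight (Sum.inl q) t = G.qWeight q t := by
  have hroots : {x | G.toWTAc.tgt x = Sum.inl q ∧ G.toWTAc.ConstraintsHold x t} =
      G.rootPos '' {p | G.tgt p = q ∧ G.ConstraintsHold p t} := by
    ext x
    constructor
    · rintro ⟨hq, hx⟩
      by_cases hnil : x.pos = []
      · rw [eq_rootPos_of_nil hnil] at hq hx ⊢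
        rw [toWTAc_tgt_rootPos, Sum.inl_injective.eq_iff] at hq
        exact ⟨x.prod, ⟨hq, constraintsHold_toWTAc_rootPos.mp hx⟩, rfl⟩
      · rw [toWTAc_tgt_of_ne_nil hnil] at hq
        cases hq
    · rintro ⟨p, ⟨rfl, hp⟩, rfl⟩
      exact ⟨toWTAc_tgt_rootPos, constraintsHold_toWTAc_rootPos.mpr hp⟩
  rw [qWeight_eq_finsum, qWeight_eq_finsum, hroots, finsum_mem_image rootPos_injective.injOn]
  refine finsum_mem_congr rfl fun p _ => ?_
  rw [toWTAc_wt_rootPos, ht, node_rootPos]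

theorem qWeight_toWTAc_inr
    (ht : ∀ x, G.toWTAc.formWeight (G.toWTAc.lhs x) t =
      G.formWeight (node (Sum.inl x.sym) x.children) t) (hx : x.pos ≠ []) :
    G.toWTAc.qWeight (Sum.inr x) t = G.formWeight (node (Sum.inl x.sym) x.children) t := by
  have hx' : {x' | G.toWTAc.tgt x' = Sum.inr x ∧ G.toWTAc.ConstraintsHold x' t} = {x} := by
    ext x'
    constructor
    · rintro ⟨hq, -⟩
      by_cases hnil : x'.pos = []
      · rw [eq_rootPos_of_nil hnil, toWTAc_tgt_rootPos] at hq
        cases hq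
      · rw [toWTAc_tgt_of_ne_nil hnil] at hq
        exact Sum.inr_injective hq
    · rintro rfl
      exact ⟨toWTAc_tgt_of_ne_nil hx, constraintsHold_toWTAc_of_ne_nil hx⟩
  rw [qWeight_eq_finsum, hx', finsum_mem_singleton, toWTAc_wt_of_ne_nil hx, one_mul, ht]

theorem weightsAgree (t : RTree Γ) : G.WeightsAgree t := by
  induction t using RTree.node_induction with
  | ih b ts ih =>
    have ht := fun x => formWeight_toWTAc_lhs (x := x) (b := b) ih
    exact ⟨qWeight_toWTAc_inl ht, fun _ => qWeight_toWTAc_inr ht⟩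

theorem toWTAc_equivalent (G : WTGc S Γ ar) : G.Equivalent G.toWTAc := by
  intro t
  have := G.finQ
  have := Fintype.ofFinite G.Q
  have := G.finite_termPos
  have := Fintype.ofFinite G.TermPos
  rw [weight, weight, finsum_eq_sum_of_fintype, finsum_eq_sum_of_fintype, Fintype.sum_sum_type]
  simp [(weightsAgree t).1]

end toWTAc

end WTGc

theorem stmt0_general {S : Type} [CommSemiring S] {Γ : Type} {ar : Γ → ℕ}
    (G : WTGc S Γ ar) :
    ∃ G' : WTGc S Γ ar, G'.IsWTAc ∧ G.Equivalent G' ∧ (G.Positive → G'.Positive) :=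
  ⟨G.toWTAc, G.toWTAc_isWTAc, G.toWTAc_equivalent, WTGc.toWTAc_positive⟩

/-- For every WTGc over a commutative semiring `S` there exists an
equivalent WTAc (all productions normalized); if the WTGc is positive, the WTAc
can be chosen positive. -/
theorem stmt0 {S : Type} [CommSemiring S] {Γ : Type} [Finite Γ] {ar : Γ → ℕ}
    (G : WTGc S Γ ar) :
    ∃ G' : WTGc S Γ ar, G'.IsWTAc ∧ G.Equivalent G' ∧ (G.Positive → G'.Positive) :=
  stmt0_general G
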